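/- Let n ≥ 1. A vector (n_0, n_1, …, n_{n-1}) of nonnegative integers with Σ_{j=0}^{n-1} n_j = n is the shell distribution of some simple graph on n vertices if and only if n_m ≥ m + 1, where m is the largest index j with n_j > 0. -/

import Mathlib

/-- `MinDegGE G k S`: the subgraph of `G` induced on the vertex set `S` has minimum
degree at least `k`, i.e. every vertex of `S` has at least `k` neighbors inside `S`. -/
def MinDegGE {V : Type*} (G : SimpleGraph V) (k : ℕ) (S : Set V) : Prop :=
  ∀ v ∈ S, k ≤ Nat.card {w : V // G.Adj v w ∧ w ∈ S}

/-- The vertex set of the `k`-core of `G`: the union of all vertex subsets inducing a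
subgraph of minimum degree at least `k`. -/
def coreVerts {V : Type*} (G : SimpleGraph V) (k : ℕ) : Set V :=
  {v | ∃ S : Set V, MinDegGE G k S ∧ v ∈ S}

/-- The shell index of `v`: the largest `k` such that `v` belongs to the `k`-core. -/
noncomputable def shellIndex {V : Type*} (G : SimpleGraph V) (v : V) : ℕ :=
  sSup {k : ℕ | v ∈ coreVerts G k}

/-- `n_j(g)`: the number of vertices of `G` with shell index `j`. -/
noncomputable def shellCount {V : Type*} (G : SimpleGraph V) (j : ℕ) : ℕ :=
  Nat.card {v : V // shellIndex G v = j}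

/-! If the largest shell index is `m`, a vertex of shell index `m` lies in an `m`-core, whose
vertices all have shell index exactly `m`; an `m`-core has at least `m + 1` vertices, so
`n_m ≥ m + 1`. Conversely, label the vertices by the prescribed shell indices `ℓ`, choose `m + 1`
hubs of label `m`, make them a clique and join every other vertex `v` to the first `ℓ v` hubs.
The hubs together with `v` form an `ℓ v`-core, while every vertex off the hubs has degree
`ℓ v ≤ m`, so a core of order `> m` would have to fit inside the `m + 1` hubs. -/

open Set Function

section Core

variable {V : Type*} {G : SimpleGraph V} {k : ℕ} {S : Set V} {v : V}

theorem card_adj_mem_eq_ncard :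
    Nat.card {w // G.Adj v w ∧ w ∈ S} = (G.neighborSet v ∩ S).ncard :=
  Nat.card_coe_set_eq _

theorem MinDegGE.le_ncard_neighborSet [Finite V] (h : MinDegGE G k S) (hv : v ∈ S) :
    k ≤ (G.neighborSet v).ncard :=
  (card_adj_mem_eq_ncard ▸ h v hv).trans (ncard_le_ncard inter_subset_left)

theorem MinDegGE.add_one_le_ncard [Finite V] (h : MinDegGE G k S) (hv : v ∈ S) :
    k + 1 ≤ S.ncard := by
  have hsub : G.neighborSet v ∩ S ⊆ S \ {v} := fun _ ⟨hvw, hw⟩ =>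
    ⟨hw, (G.ne_of_adj hvw).symm⟩
  rw [← ncard_sdiff_singleton_add_one hv]
  exact Nat.add_le_add_right ((card_adj_mem_eq_ncard ▸ h v hv).trans (ncard_le_ncard hsub)) 1

theorem mem_coreVerts_zero : v ∈ coreVerts G 0 :=
  ⟨univ, fun _ _ => Nat.zero_le _, mem_univ v⟩

theorem lt_card_of_mem_coreVerts [Finite V] (h : v ∈ coreVerts G k) : k < Nat.card V := by
  obtain ⟨S, hS, hv⟩ := h
  exact (hS.add_one_le_ncard hv).trans (ncard_le_card S)

theorem bddAbove_setOf_mem_coreVerts [Finite V] : BddAbove {k | v ∈ coreVerts G k} :=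
  ⟨Nat.card V, fun _ hk => (lt_card_of_mem_coreVerts hk).le⟩

theorem shellIndex_mem_coreVerts [Finite V] : v ∈ coreVerts G (shellIndex G v) :=
  Nat.sSup_mem (s := {k | v ∈ coreVerts G k}) ⟨0, mem_coreVerts_zero⟩
    bddAbove_setOf_mem_coreVerts

theorem le_shellIndex [Finite V] (h : v ∈ coreVerts G k) : k ≤ shellIndex G v :=
  le_csSup bddAbove_setOf_mem_coreVerts h

theorem shellIndex_le {K : ℕ} (h : ∀ k, v ∈ coreVerts G k → k ≤ K) : shellIndex G v ≤ K :=
  csSup_le ⟨0, mem_coreVerts_zero⟩ h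

theorem shellIndex_lt_card [Finite V] : shellIndex G v < Nat.card V :=
  lt_card_of_mem_coreVerts shellIndex_mem_coreVerts

theorem shellIndex_le_ncard_neighborSet [Finite V] :
    shellIndex G v ≤ (G.neighborSet v).ncard :=
  shellIndex_le fun _ ⟨_, hS, hv⟩ => hS.le_ncard_neighborSet hv

theorem add_one_le_shellCount_of_forall_le [Finite V] {m : ℕ} (hv : shellIndex G v = m)
    (hmax : ∀ w, shellIndex G w ≤ m) : m + 1 ≤ shellCount G m := by
  obtain ⟨S, hS, hvS⟩ : v ∈ coreVerts G m := hv ▸ shellIndex_mem_coreVerts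
  -- the `m`-core witnessing `shellIndex G v = m` lies in the top shell
  have hsub : S ⊆ {w | shellIndex G w = m} := fun w hw =>
    (hmax w).antisymm (le_shellIndex ⟨S, hS, hw⟩)
  change m + 1 ≤ Nat.card ({w | shellIndex G w = m} : Set V)
  rw [Nat.card_coe_set_eq]
  exact (hS.add_one_le_ncard hvS).trans (ncard_le_ncard hsub)

end Core

section HubGraph

variable {V : Type*} {m : ℕ} {κ : Fin (m + 1) → V} {ℓ : V → ℕ} {v : V}

/-- The hubs `κ i` form a clique (of two distinct indices, one is `< m`), and a vertex `v` off
the hubs is joined exactly to the hubs `κ i` with `i < ℓ v`. -/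
def hubGraph (κ : Fin (m + 1) → V) (ℓ : V → ℕ) : SimpleGraph V :=
  SimpleGraph.fromRel fun u w => ∃ i, κ i = u ∧ (i : ℕ) < ℓ w

theorem hubGraph_adj_hub (hκ : Injective κ) (hκℓ : ∀ i, ℓ (κ i) = m) {i j : Fin (m + 1)}
    (hij : i ≠ j) : (hubGraph κ ℓ).Adj (κ i) (κ j) := by
  refine ⟨hκ.ne hij, ?_⟩
  have hi := i.isLt
  have hj := j.isLt
  rcases Fin.lt_or_lt_of_ne hij with h | h
  · exact Or.inl ⟨i, rfl, by rw [hκℓ]; omega⟩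
  · exact Or.inr ⟨j, rfl, by rw [hκℓ]; omega⟩

theorem neighborSet_hubGraph (hv : v ∉ range κ) :
    (hubGraph κ ℓ).neighborSet v = κ '' {i | (i : ℕ) < ℓ v} := by
  ext w
  simp only [SimpleGraph.mem_neighborSet, hubGraph, SimpleGraph.fromRel_adj, mem_image]
  constructor
  · rintro ⟨-, ⟨i, rfl, -⟩ | ⟨i, hi, hlt⟩⟩
    · exact absurd (mem_range_self i) hv
    · exact ⟨i, hlt, hi⟩
  · rintro ⟨i, hlt, rfl⟩
    exact ⟨fun h => hv ⟨i, h.symm⟩, Or.inr ⟨i, rfl, hlt⟩⟩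

theorem ncard_setOf_fin_val_lt (n k : ℕ) : {i : Fin n | (i : ℕ) < k}.ncard = min n k := by
  rw [← Fin.card_filter_val_lt, ← ncard_coe_finset, Finset.coe_filter]
  simp

theorem ncard_neighborSet_hubGraph (hκ : Injective κ) (hv : v ∉ range κ) :
    ((hubGraph κ ℓ).neighborSet v).ncard = min (m + 1) (ℓ v) := by
  rw [neighborSet_hubGraph hv, ncard_image_of_injective _ hκ, ncard_setOf_fin_val_lt]

theorem mem_coreVerts_hubGraph [Finite V] (hκ : Injective κ) (hκℓ : ∀ i, ℓ (κ i) = m)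
    (hv : ℓ v ≤ m) : v ∈ coreVerts (hubGraph κ ℓ) (ℓ v) := by
  refine ⟨insert v (range κ), fun u hu => ?_, mem_insert v _⟩
  rw [card_adj_mem_eq_ncard]
  by_cases hu' : u ∈ range κ
  · obtain ⟨i, rfl⟩ := hu'
    have hcompl : (univ \ {i}).ncard + 1 = m + 1 := by
      rw [ncard_sdiff_singleton_add_one (mem_univ i), ncard_univ, Nat.card_fin]
    have hsub : κ '' (univ \ {i}) ⊆ (hubGraph κ ℓ).neighborSet (κ i) ∩ insert v (range κ) := by
      rintro _ ⟨j, ⟨-, hji⟩, rfl⟩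
      exact ⟨hubGraph_adj_hub hκ hκℓ (Ne.symm hji), mem_insert_of_mem _ (mem_range_self j)⟩
    calc ℓ v ≤ (κ '' (univ \ {i})).ncard := by
          rw [ncard_image_of_injective _ hκ]; omega
      _ ≤ _ := ncard_le_ncard hsub
  · obtain rfl : u = v := by simpa [hu'] using hu
    have hsub : (hubGraph κ ℓ).neighborSet u ⊆ insert u (range κ) := by
      rw [neighborSet_hubGraph hu']
      exact (image_subset_range _ _).trans (subset_insert _ _)
    rw [inter_eq_left.2 hsub, ncard_neighborSet_hubGraph hκ hu']
    omega

theorem shellIndex_hubGraph [Finite V] (hκ : Injective κ) (hκℓ : ∀ i, ℓ (κ i) = m)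
    (hℓ : ∀ v, ℓ v ≤ m) (v : V) : shellIndex (hubGraph κ ℓ) v = ℓ v := by
  refine le_antisymm ?_ (le_shellIndex (mem_coreVerts_hubGraph hκ hκℓ (hℓ v)))
  by_cases hv : v ∈ range κ
  · obtain ⟨i, rfl⟩ := hv
    refine shellIndex_le fun k ⟨S, hS, hvS⟩ => ?_
    by_contra! hk
    rw [hκℓ] at hk
    -- off the hubs every degree is at most `m < k`, so `S` is made of hubs only
    have hSκ : S ⊆ range κ := fun w hw => by
      by_contra hw'
      have := hS.le_ncard_neighborSet hw
      rw [ncard_neighborSet_hubGraph hκ hw'] at this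
      have := hℓ w
      omega
    have := (hS.add_one_le_ncard hvS).trans (ncard_le_ncard hSκ)
    rw [ncard_range_of_injective hκ, Nat.card_fin] at this
    omega
  · calc shellIndex (hubGraph κ ℓ) v ≤ ((hubGraph κ ℓ).neighborSet v).ncard :=
          shellIndex_le_ncard_neighborSet
      _ ≤ ℓ v := by rw [ncard_neighborSet_hubGraph hκ hv]; exact min_le_right _ _

end HubGraph

theorem exists_shellIndex_eq {V : Type*} [Finite V] {ℓ : V → ℕ} {m : ℕ} (hℓ : ∀ v, ℓ v ≤ m)
    (htop : m + 1 ≤ Nat.card {v // ℓ v = m}) : ∃ G : SimpleGraph V, ∀ v, shellIndex G v = ℓ v := by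
  obtain ⟨T, hT, hTcard⟩ := exists_subset_card_eq (s := {v | ℓ v = m}) htop
  let e := Finite.equivFinOfCardEq ((Nat.card_coe_set_eq T).trans hTcard)
  exact ⟨hubGraph (fun i => (e.symm i : V)) ℓ,
    shellIndex_hubGraph (Subtype.val_injective.comp e.symm.injective) (fun i => hT (e.symm i).2) hℓ⟩

theorem exists_card_fiber_eq {ι V : Type*} [Fintype ι] [Finite V] (c : ι → ℕ)
    (h : ∑ j, c j = Nat.card V) : ∃ f : V → ι, ∀ j, Nat.card {v // f v = j} = c j := by
  obtain ⟨e⟩ : Nonempty (V ≃ Σ j, Fin (c j)) := Finite.card_eq.1 (by simp [h])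
  exact ⟨fun v => (e v).1, fun j =>
    (Nat.card_congr ((e.subtypeEquiv fun _ => Iff.rfl).trans (Equiv.sigmaSubtype j))).trans
      (Nat.card_fin _)⟩

theorem shell_distribution_realizable_iff_general {n : ℕ} (c : Fin n → ℕ)
    (hsum : ∑ j, c j = n) (m : Fin n) (hm : IsGreatest {j : Fin n | 0 < c j} m) :
    (∃ G : SimpleGraph (Fin n), ∀ j : Fin n, shellCount G (j : ℕ) = c j) ↔
      (m : ℕ) + 1 ≤ c m := by
  constructor
  · rintro ⟨G, hG⟩
    obtain ⟨⟨v, hv⟩⟩ : Nonempty {v // shellIndex G v = m} :=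
      Finite.card_pos_iff.1 (show 0 < shellCount G m from (hG m).symm ▸ hm.1)
    have hmax (w : Fin n) : shellIndex G w ≤ m := by
      have hw : shellIndex G w < n := by simpa using shellIndex_lt_card (G := G) (v := w)
      exact hm.2 (show 0 < c ⟨_, hw⟩ from hG ⟨_, hw⟩ ▸ Finite.card_pos_iff.2 ⟨⟨w, rfl⟩⟩)
    exact hG m ▸ add_one_le_shellCount_of_forall_le hv hmax
  · intro hcm
    obtain ⟨f, hf⟩ := exists_card_fiber_eq (V := Fin n) c (by simpa using hsum)
    have hfm (v : Fin n) : f v ≤ m :=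
      hm.2 (show 0 < c (f v) from hf _ ▸ Finite.card_pos_iff.2 ⟨⟨v, rfl⟩⟩)
    have hfibers (j : Fin n) : Nat.card {v // (f v : ℕ) = j} = c j := by
      simp_rw [Fin.val_inj]; exact hf j
    obtain ⟨G, hG⟩ := exists_shellIndex_eq hfm ((hfibers m).symm ▸ hcm)
    exact ⟨G, fun j => by simp_rw [shellCount, hG]; exact hfibers j⟩

/-- Let `n ≥ 1`. A vector `(n_0, …, n_{n-1})` of nonnegative integers
with `Σ n_j = n` is the shell distribution of some simple graph on `n` vertices if and
only if `n_m ≥ m + 1`, where `m` is the largest index `j` with `n_j > 0`. -/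
theorem shell_distribution_realizable_iff {n : ℕ} (hn : 1 ≤ n) (c : Fin n → ℕ)
    (hsum : ∑ j, c j = n) (m : Fin n) (hm : IsGreatest {j : Fin n | 0 < c j} m) :
    (∃ G : SimpleGraph (Fin n), ∀ j : Fin n, shellCount G (j : ℕ) = c j) ↔
      (m : ℕ) + 1 ≤ c m :=
  shell_distribution_realizable_iff_general c hsum m hm
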